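/- The double sum ∑_{m,n ≥ 0} (-1)^n q^{m^2 + m + mn + n(n+1)/2} / ((q)_m (q)_n) equals the false theta function h_4(q) = ∑_{n≥0} q^{2n(n+1)-n} - ∑_{n<0} q^{2n(n+1)-n} = ∑_{n≥0} (q^{2n^2+n} - q^{2n^2+3n+1}). -/

import Mathlib

open scoped BigOperators

noncomputable def qPoch (q : ℂ) (n : ℕ) : ℂ := ∏ k ∈ Finset.range n, (1 - q ^ (k + 1))

noncomputable def qPochInf (q : ℂ) : ℂ := ∏' k : ℕ, (1 - q ^ (k + 1))

noncomputable def hseries (b : ℕ) (q : ℂ) : ℂ :=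
  ∑' n : ℤ, (if Odd b then (-1 : ℂ) ^ n else if 0 ≤ n then 1 else -1) *
    q ^ ((b : ℤ) * n * (n + 1) / 2 - n)

/-!
Write `T m n` for the summand and group the terms by `J = m + n`. The sum `D J` over `m + n = J`
is `(-1)^J q^(J(J+1)/2)`; by the `q`-binomial theorem, `(q)_J D J = q^(J^2+J) (q^(-J); q)_J`.
Here it follows from the recursion `D (J + 1) = -q^(J+1) D J`, which amounts to the vanishing of
the weighted sums `∑_{m+n=K} q^n T m n` for `K ≥ 1`: these telescope, since consecutive terms
have ratio `-q^m (1 - q^(K-m)) / (1 - q^(m+1))`. The false theta series `∑ (-1)^j q^(j(j+1)/2)`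
so obtained is `h₄`, reindexed by `j = 2n` for `n ≥ 0` and `j = -2n - 1` for `n < 0`.
Regrouping is legitimate because `‖(q)_m‖ ≥ exp (-1 / (1 - ‖q‖)^2)` for all `m`, so the double
series is dominated by `∑ ‖q‖^(m+n)`.
-/

open Finset

theorem Summable.tsum_eq_tsum_sum_antidiagonal {A α : Type*} [AddCommMonoid A]
    [HasAntidiagonal A] [AddCommMonoid α] [TopologicalSpace α] [ContinuousAdd α] [T3Space α]
    {f : A × A → α} (hf : Summable f) : ∑' p, f p = ∑' n, ∑ p ∈ antidiagonal n, f p := by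
  let e := HasAntidiagonal.sigmaAntidiagonalEquivProd (A := A)
  calc ∑' p, f p = ∑' x, f (e x) := (e.tsum_eq f).symm
    _ = ∑' (n : A) (p : antidiagonal n), f p :=
        (e.summable_iff.mpr hf).tsum_sigma' fun _ => .of_finite
    _ = ∑' n, ∑ p ∈ antidiagonal n, f p := tsum_congr fun n => tsum_subtype _ f

theorem Real.exp_neg_div_le_one_sub {x t : ℝ} (hx : 0 ≤ x) (hxt : x ≤ t) (ht : t < 1) :
    exp (-(x / (1 - t))) ≤ 1 - x := by
  have hx1 : 0 < 1 - x := by linarith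
  calc exp (-(x / (1 - t))) ≤ exp (1 - (1 - x)⁻¹) := by
        rw [exp_le_exp, show 1 - (1 - x)⁻¹ = -(x / (1 - x)) by field_simp; ring, neg_le_neg_iff]
        exact div_le_div_of_nonneg_left hx (by linarith) (by linarith)
    _ ≤ exp (log (1 - x)) := exp_le_exp.mpr (one_sub_inv_le_log_of_pos hx1)
    _ = 1 - x := exp_log hx1

section qPoch

variable {q : ℂ}

theorem qPoch_succ (n : ℕ) : qPoch q (n + 1) = qPoch q n * (1 - q ^ (n + 1)) :=
  prod_range_succ _ n

theorem one_sub_pow_ne_zero_of_qPoch_ne_zero {n : ℕ} (h : qPoch q n ≠ 0) (hn : n ≠ 0) :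
    1 - q ^ n ≠ 0 := by
  obtain ⟨n, rfl⟩ := Nat.exists_eq_succ_of_ne_zero hn
  rw [qPoch_succ] at h
  exact right_ne_zero_of_mul h

theorem one_sub_pow_ne_zero (hq : ‖q‖ < 1) {k : ℕ} (hk : k ≠ 0) : 1 - q ^ k ≠ 0 := by
  rw [sub_ne_zero, ne_comm]
  intro h
  have := congrArg norm h
  rw [norm_pow, norm_one] at this
  exact (pow_lt_one₀ (norm_nonneg q) hq hk).ne this

theorem qPoch_ne_zero (hq : ‖q‖ < 1) (n : ℕ) : qPoch q n ≠ 0 :=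
  prod_ne_zero_iff.mpr fun k _ => one_sub_pow_ne_zero hq k.succ_ne_zero

theorem exp_le_norm_qPoch (hq : ‖q‖ < 1) (n : ℕ) :
    Real.exp (-(1 / (1 - ‖q‖) ^ 2)) ≤ ‖qPoch q n‖ := by
  set r := ‖q‖
  have hr : 0 ≤ r := norm_nonneg q
  have hgeom : ∑ k ∈ range n, r ^ (k + 1) ≤ 1 / (1 - r) := by
    calc ∑ k ∈ range n, r ^ (k + 1) ≤ ∑ k ∈ range n, r ^ k :=
          sum_le_sum fun k _ => pow_le_pow_of_le_one hr hq.le (Nat.le_succ k)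
      _ ≤ r ^ 0 / (1 - r) := by
          rw [range_eq_Ico]; exact geom_sum_Ico_le_of_lt_one hr hq
      _ = 1 / (1 - r) := by rw [pow_zero]
  calc Real.exp (-(1 / (1 - r) ^ 2))
      ≤ Real.exp (-((∑ k ∈ range n, r ^ (k + 1)) / (1 - r))) := by
        rw [Real.exp_le_exp, neg_le_neg_iff, sq, ← div_div]
        exact div_le_div_of_nonneg_right hgeom (by linarith)
    _ = ∏ k ∈ range n, Real.exp (-(r ^ (k + 1) / (1 - r))) := by
        rw [← Real.exp_sum, sum_div, ← sum_neg_distrib]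
    _ ≤ ∏ k ∈ range n, ‖1 - q ^ (k + 1)‖ := by
        refine prod_le_prod (fun _ _ => (Real.exp_pos _).le) fun k _ => ?_
        calc Real.exp (-(r ^ (k + 1) / (1 - r))) ≤ 1 - r ^ (k + 1) :=
              Real.exp_neg_div_le_one_sub (pow_nonneg hr _)
                (pow_le_of_le_one hr hq.le k.succ_ne_zero) hq
          _ = ‖(1 : ℂ)‖ - ‖q ^ (k + 1)‖ := by rw [norm_one, norm_pow]
          _ ≤ ‖1 - q ^ (k + 1)‖ := norm_sub_norm_le _ _
    _ = ‖qPoch q n‖ := (norm_prod _ _).symm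

end qPoch

noncomputable def doubleSumTerm (q : ℂ) (m n : ℕ) : ℂ :=
  (-1 : ℂ) ^ n * q ^ (m ^ 2 + m + m * n + n * (n + 1) / 2) / (qPoch q m * qPoch q n)

theorem triangle_succ (n : ℕ) : (n + 1) * (n + 2) / 2 = n * (n + 1) / 2 + (n + 1) := by
  rw [show (n + 1) * (n + 2) = n * (n + 1) + 2 * (n + 1) by ring, Nat.add_mul_div_left _ _ two_pos]

theorem le_triangle (n : ℕ) : n ≤ n * (n + 1) / 2 := by
  rw [Nat.le_div_iff_mul_le two_pos]
  rcases n with _ | n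
  · rfl
  · exact Nat.mul_le_mul_left _ (by omega)

section Antidiagonal

variable {q : ℂ} (hq : ∀ n, qPoch q n ≠ 0)
include hq

theorem one_sub_pow_succ_mul_doubleSumTerm_succ_right (m n : ℕ) :
    (1 - q ^ (n + 1)) * doubleSumTerm q m (n + 1) = -(q ^ (m + n + 1) * doubleSumTerm q m n) := by
  have hexp : m ^ 2 + m + m * (n + 1) + (n + 1) * (n + 2) / 2
      = (m + n + 1) + (m ^ 2 + m + m * n + n * (n + 1) / 2) := by
    rw [triangle_succ]; ring
  have hn := one_sub_pow_ne_zero_of_qPoch_ne_zero (hq (n + 1)) n.succ_ne_zero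
  unfold doubleSumTerm
  rw [hexp, pow_add, qPoch_succ]
  field_simp [hq m, hq n]
  ring

theorem one_sub_pow_succ_mul_doubleSumTerm_succ_left (m n : ℕ) :
    (1 - q ^ (m + 1)) * doubleSumTerm q (m + 1) n = q ^ (2 * m + n + 2) * doubleSumTerm q m n := by
  have hexp : (m + 1) ^ 2 + (m + 1) + (m + 1) * n + n * (n + 1) / 2
      = (2 * m + n + 2) + (m ^ 2 + m + m * n + n * (n + 1) / 2) := by ring
  have hm := one_sub_pow_ne_zero_of_qPoch_ne_zero (hq (m + 1)) m.succ_ne_zero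
  unfold doubleSumTerm
  rw [hexp, pow_add, qPoch_succ]
  field_simp [hq m, hq n]
  ring

theorem sum_antidiagonal_pow_mul_doubleSumTerm {K : ℕ} (hK : K ≠ 0) :
    ∑ p ∈ antidiagonal K, q ^ p.2 * doubleSumTerm q p.1 p.2 = 0 := by
  set w : ℕ → ℂ := fun m => q ^ (K - m) * doubleSumTerm q m (K - m)
  have hratio : ∀ m < K, (1 - q ^ (m + 1)) * w (m + 1) = -(q ^ m * ((1 - q ^ (K - m)) * w m)) := by
    intro m hm
    obtain ⟨n, rfl⟩ : ∃ n, K = m + 1 + n := ⟨K - (m + 1), by omega⟩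
    simp only [w, show m + 1 + n - (m + 1) = n by omega, show m + 1 + n - m = n + 1 by omega]
    linear_combination q ^ n * one_sub_pow_succ_mul_doubleSumTerm_succ_left hq m n +
      q ^ (m + n + 1) * one_sub_pow_succ_mul_doubleSumTerm_succ_right hq m n
  have htelescope : ∀ m ≤ K, (1 - q ^ K) * ∑ i ∈ range m, w i = -((1 - q ^ m) * w m) := by
    intro m
    induction m with
    | zero => simp
    | succ m ih =>
      intro hm
      have hpow : q ^ m * q ^ (K - m) = q ^ K := by rw [← pow_add]; congr 1; omega
      rw [sum_range_succ, mul_add, ih (by omega)]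
      linear_combination hratio m hm + w m * hpow
  have hK' := one_sub_pow_ne_zero_of_qPoch_ne_zero (hq K) hK
  rw [Nat.sum_antidiagonal_eq_sum_range_succ (fun m n => q ^ n * doubleSumTerm q m n),
    sum_range_succ]
  refine (mul_eq_zero.mp ?_).resolve_left hK'
  linear_combination htelescope K le_rfl

theorem sum_antidiagonal_doubleSumTerm (J : ℕ) :
    ∑ p ∈ antidiagonal J, doubleSumTerm q p.1 p.2 = (-1) ^ J * q ^ (J * (J + 1) / 2) := by
  induction J with
  | zero => simp [doubleSumTerm, qPoch]
  | succ J ih =>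
    have hweighted := sum_antidiagonal_pow_mul_doubleSumTerm hq J.succ_ne_zero
    rw [Nat.sum_antidiagonal_succ'] at hweighted ⊢
    have hshift : ∑ p ∈ antidiagonal J, q ^ (p.2 + 1) * doubleSumTerm q p.1 (p.2 + 1)
        = ∑ p ∈ antidiagonal J, doubleSumTerm q p.1 (p.2 + 1)
          + q ^ (J + 1) * ∑ p ∈ antidiagonal J, doubleSumTerm q p.1 p.2 := by
      rw [mul_sum, ← sum_add_distrib]
      refine sum_congr rfl fun p hp => ?_
      rw [HasAntidiagonal.mem_antidiagonal] at hp
      subst hp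
      linear_combination -one_sub_pow_succ_mul_doubleSumTerm_succ_right hq p.1 p.2
    rw [hshift, ih, pow_zero, one_mul] at hweighted
    rw [triangle_succ, pow_add, pow_succ]
    linear_combination hweighted

end Antidiagonal

theorem norm_doubleSumTerm_le {q : ℂ} (hq : ‖q‖ < 1) (m n : ℕ) :
    ‖doubleSumTerm q m n‖ ≤ (Real.exp (-(1 / (1 - ‖q‖) ^ 2)))⁻¹ ^ 2 * (‖q‖ ^ m * ‖q‖ ^ n) := by
  set c := Real.exp (-(1 / (1 - ‖q‖) ^ 2))
  have hexp : m + n ≤ m ^ 2 + m + m * n + n * (n + 1) / 2 := by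
    have := le_triangle n
    nlinarith
  calc ‖doubleSumTerm q m n‖
      = ‖q‖ ^ (m ^ 2 + m + m * n + n * (n + 1) / 2) / (‖qPoch q m‖ * ‖qPoch q n‖) := by
        simp [doubleSumTerm]
    _ ≤ ‖q‖ ^ (m + n) / (c * c) :=
        div_le_div₀ (by positivity) (pow_le_pow_of_le_one (norm_nonneg q) hq.le hexp)
          (by positivity) (mul_le_mul (exp_le_norm_qPoch hq m) (exp_le_norm_qPoch hq n)
            (by positivity) (norm_nonneg _))
    _ = c⁻¹ ^ 2 * (‖q‖ ^ m * ‖q‖ ^ n) := by rw [pow_add]; field_simp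

theorem summable_doubleSumTerm {q : ℂ} (hq : ‖q‖ < 1) :
    Summable fun p : ℕ × ℕ => doubleSumTerm q p.1 p.2 := by
  have hgeom := summable_geometric_of_lt_one (norm_nonneg q) hq
  exact ((hgeom.mul_of_nonneg hgeom (fun _ => by positivity) fun _ => by positivity).mul_left
    _).of_norm_bounded fun p => norm_doubleSumTerm_le hq p.1 p.2

theorem hseries_four (q : ℂ) : hseries 4 q = ∑' j : ℕ, (-1) ^ j * q ^ (j * (j + 1) / 2) := by
  have hexp (n : ℤ) : 4 * n * (n + 1) / 2 - n = n * (2 * n + 1) := by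
    rw [show 4 * n * (n + 1) = 2 * (2 * n * (n + 1)) by ring,
      Int.mul_ediv_cancel_left _ two_ne_zero]
    ring
  rw [hseries, ← Equiv.intEquivNat.tsum_eq]
  refine tsum_congr fun n => ?_
  rw [if_neg (by decide), Nat.cast_ofNat, hexp]
  rcases n with k | k
  · have htri : 2 * k * (2 * k + 1) / 2 = k * (2 * k + 1) := by
      rw [mul_assoc, Nat.mul_div_cancel_left _ two_pos]
    rw [show Equiv.intEquivNat (Int.ofNat k) = 2 * k from rfl, htri, pow_mul, Int.ofNat_eq_natCast,
      if_pos (Int.natCast_nonneg k)]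
    norm_cast
    simp
  · have htri : (2 * k + 1) * (2 * k + 1 + 1) / 2 = (k + 1) * (2 * k + 1) := by
      rw [show (2 * k + 1) * (2 * k + 1 + 1) = 2 * ((k + 1) * (2 * k + 1)) by ring,
        Nat.mul_div_cancel_left _ two_pos]
    rw [show Equiv.intEquivNat (Int.negSucc k) = 2 * k + 1 from rfl, htri, pow_succ, pow_mul,
      if_neg (Int.negSucc_lt_zero k).not_ge, Int.negSucc_eq,
      show (-(k + 1 : ℤ)) * (2 * -(k + 1) + 1) = (k + 1) * (2 * k + 1) by ring]
    norm_cast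
    simp

theorem double_sum_h4 (q : ℂ) (hq : ‖q‖ < 1) :
    ∑' (m : ℕ) (n : ℕ), (-1 : ℂ) ^ n * q ^ (m ^ 2 + m + m * n + n * (n + 1) / 2) /
      (qPoch q m * qPoch q n) = hseries 4 q := by
  have hsum := summable_doubleSumTerm hq
  calc ∑' (m : ℕ) (n : ℕ), doubleSumTerm q m n = ∑' p : ℕ × ℕ, doubleSumTerm q p.1 p.2 :=
        (hsum.tsum_prod' hsum.prod_factor).symm
    _ = ∑' J, ∑ p ∈ antidiagonal J, doubleSumTerm q p.1 p.2 := hsum.tsum_eq_tsum_sum_antidiagonal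
    _ = ∑' J : ℕ, (-1) ^ J * q ^ (J * (J + 1) / 2) :=
        tsum_congr (sum_antidiagonal_doubleSumTerm (qPoch_ne_zero hq))
    _ = hseries 4 q := (hseries_four q).symm
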